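/- For a finite collection U = {U_1, ..., U_{n-1}, V} of monomorphisms into X in C, writing U' = {U_1, ..., U_{n-1}} and U'' = {U_i ×_X V → V}, the presheaf ∪U is the pushout of ∪U' ← ∪U'' → V in the category of presheaves. -/

import Mathlib

open CategoryTheory CategoryTheory.Limits Simplicial SSet Opposite

/-- Presheaves of sets on a small category. -/
abbrev PSh (C : Type) [SmallCategory C] := Cᵒᵖ ⥤ Type

namespace Flasque

variable {C : Type} [SmallCategory C]

/-- The source of the union coequalizer diagram: the coproduct of the pairwise
fiber products (computed in presheaves). -/
noncomputable def pairObj {ι : Type} {A : ι → PSh C} {X : PSh C} (g : ∀ i, A i ⟶ X)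
    (p : ι × ι) : PSh C :=
  pullback (g p.1) (g p.2)

noncomputable def fstMap {ι : Type} {A : ι → PSh C} {X : PSh C} (g : ∀ i, A i ⟶ X) :
    (∐ pairObj g) ⟶ ∐ A :=
  Sigma.desc fun p => pullback.fst (g p.1) (g p.2) ≫ Sigma.ι A p.1

noncomputable def sndMap {ι : Type} {A : ι → PSh C} {X : PSh C} (g : ∀ i, A i ⟶ X) :
    (∐ pairObj g) ⟶ ∐ A :=
  Sigma.desc fun p => pullback.snd (g p.1) (g p.2) ≫ Sigma.ι A p.2

/-- The union `∪ U`: the coequalizer of `∐ U_i ×_X U_j ⇉ ∐ U_i`. -/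
noncomputable def unionPre {ι : Type} {A : ι → PSh C} {X : PSh C} (g : ∀ i, A i ⟶ X) : PSh C :=
  coequalizer (fstMap g) (sndMap g)

/-- The canonical map `∪ U ⟶ X`. -/
noncomputable def unionι {ι : Type} {A : ι → PSh C} {X : PSh C} (g : ∀ i, A i ⟶ X) :
    unionPre g ⟶ X :=
  coequalizer.desc (Sigma.desc g) (by
    apply Sigma.hom_ext
    intro p
    simp [fstMap, sndMap, pullback.condition]
    show (pullback.fst (g p.1) (g p.2) ≫ Sigma.ι A p.1) ≫ Sigma.desc g =
      (pullback.snd (g p.1) (g p.2) ≫ Sigma.ι A p.2) ≫ Sigma.desc g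
    simp [pullback.condition])

end Flasque

namespace Flasque

variable {C : Type} [SmallCategory C] {n : ℕ}
variable (U : Fin n → C) (X : C) (V : C)

/-- The enlarged family `{U_1, ..., U_{n-1}, V}`, indexed by `Option (Fin n)`
with `none` corresponding to `V`. -/
noncomputable def bigA : Option (Fin n) → PSh C := fun o => match o with
  | none => yoneda.obj V
  | some i => yoneda.obj (U i)

variable (g : ∀ i, U i ⟶ X) (h : V ⟶ X)

noncomputable def bigg : ∀ o, bigA U V o ⟶ yoneda.obj X := fun o => match o with
  | none => yoneda.map h
  | some i => yoneda.map (g i)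

/-- The family `U'' = {U_i ×_X V → V}` (fiber products computed in presheaves). -/
noncomputable def ddA (i : Fin n) : PSh C := pullback (yoneda.map (g i)) (yoneda.map h)

noncomputable def ddg (i : Fin n) : ddA U X V g h i ⟶ yoneda.obj V :=
  pullback.snd _ _

/-- The canonical map `∪U'' ⟶ ∪U'`. -/
noncomputable def unionDDtoUnion :
    unionPre (ddg U X V g h) ⟶ unionPre (fun i => yoneda.map (g i)) :=
  coequalizer.desc
    (Sigma.desc fun i => pullback.fst (yoneda.map (g i)) (yoneda.map h) ≫
      Sigma.ι (fun i => yoneda.obj (U i)) i ≫ coequalizer.π _ _)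
    (by
      apply Sigma.hom_ext; intro p
      have cond : (pullback.fst (ddg U X V g h p.1) (ddg U X V g h p.2) ≫
            pullback.fst (yoneda.map (g p.1)) (yoneda.map h)) ≫ yoneda.map (g p.1)
          = (pullback.snd (ddg U X V g h p.1) (ddg U X V g h p.2) ≫
            pullback.fst (yoneda.map (g p.2)) (yoneda.map h)) ≫ yoneda.map (g p.2) := by
        have c3 := pullback.condition (f := ddg U X V g h p.1) (g := ddg U X V g h p.2)
        erw [Category.assoc, Category.assoc, pullback.condition, pullback.condition,
          ← Category.assoc, ← Category.assoc]
        exact c3 =≫ yoneda.map h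
      set q : pairObj (ddg U X V g h) p ⟶ pairObj (fun i => yoneda.map (g i)) p :=
        pullback.lift _ _ cond with hq
      have rel := Sigma.ι (pairObj (fun i => yoneda.map (g i))) p ≫=
        coequalizer.condition (fstMap fun i => yoneda.map (g i)) (sndMap fun i => yoneda.map (g i))
      simp only [fstMap, sndMap, colimit.ι_desc_assoc, colimit.ι_desc, Cofan.mk_ι_app,
        Category.assoc] at rel ⊢
      have lhs : pullback.fst (ddg U X V g h p.1) (ddg U X V g h p.2) ≫
          pullback.fst (yoneda.map (g p.1)) (yoneda.map h) = q ≫ pullback.fst _ _ := by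
        rw [hq]; exact (pullback.lift_fst ..).symm
      have rhs : pullback.snd (ddg U X V g h p.1) (ddg U X V g h p.2) ≫
          pullback.fst (yoneda.map (g p.2)) (yoneda.map h) = q ≫ pullback.snd _ _ := by
        rw [hq]; exact (pullback.lift_snd ..).symm
      erw [Category.assoc, Category.assoc, Sigma.ι_desc, Sigma.ι_desc]
      exact (lhs =≫ _).trans ((Category.assoc _ _ _).trans ((q ≫= ((Category.assoc _ _ _).symm.trans
        (rel.trans (Category.assoc _ _ _)))).trans ((Category.assoc _ _ _).symm.trans (rhs =≫ _).symm))))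

/-- The canonical map `∪U' ⟶ ∪U`. -/
noncomputable def unionToBig :
    unionPre (fun i => yoneda.map (g i)) ⟶ unionPre (bigg U X V g h) :=
  coequalizer.desc
    (Sigma.desc fun i => Sigma.ι (bigA U V) (some i) ≫ coequalizer.π _ _)
    (by
      apply Sigma.hom_ext; intro p
      have h2 := Sigma.ι (pairObj (bigg U X V g h)) (some p.1, some p.2) ≫=
        coequalizer.condition (fstMap (bigg U X V g h)) (sndMap (bigg U X V g h))
      simp only [fstMap, sndMap, colimit.ι_desc_assoc, colimit.ι_desc, Cofan.mk_ι_app,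
        Category.assoc] at h2 ⊢
      erw [Category.assoc, Category.assoc, Sigma.ι_desc, Sigma.ι_desc]
      exact h2)

/-- The canonical map `V ⟶ ∪U`. -/
noncomputable def vToBig : yoneda.obj V ⟶ unionPre (bigg U X V g h) :=
  Sigma.ι (bigA U V) none ≫ coequalizer.π _ _

end Flasque

/-! A morphism out of `∪U` is a family of morphisms out of the `U_i` and out of `V` that agree on
all pairwise fibre products. Such a family amounts to a morphism out of `∪U'` and one out of `V`
that agree on `∪U''`: agreement on `U_i ×_X U_j` is built into `∪U'`, agreement on `U_i ×_X V`
is the compatibility over `∪U''`, and on `V ×_X V` it is automatic because `h` is mono, so the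
two projections `V ×_X V ⟶ V` coincide. -/

namespace Flasque

section UnionAPI

variable {C : Type} [SmallCategory C] {ι : Type} {A : ι → PSh C} {X : PSh C}
  (g : ∀ i, A i ⟶ X)

-- `unionPre`, `pairObj`, `ddA` and `bigA` occur in the types of the maps below but are not
-- reducible, so `rw` and `simp` cannot match through them; `erw` and explicit `Category.assoc`
-- terms can.

noncomputable def unionπ (i : ι) : A i ⟶ unionPre g :=
  Sigma.ι A i ≫ coequalizer.π (fstMap g) (sndMap g)

theorem unionπ_condition (i j : ι) :
    pullback.fst (g i) (g j) ≫ unionπ g i = pullback.snd (g i) (g j) ≫ unionπ g j := by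
  have h := Sigma.ι (pairObj g) (i, j) ≫= coequalizer.condition (fstMap g) (sndMap g)
  erw [fstMap, sndMap, Sigma.ι_desc_assoc, Sigma.ι_desc_assoc, Category.assoc,
    Category.assoc] at h
  exact h

theorem unionPre.hom_ext {W : PSh C} {a b : unionPre g ⟶ W}
    (hab : ∀ i, unionπ g i ≫ a = unionπ g i ≫ b) : a = b :=
  coequalizer.hom_ext <| Sigma.hom_ext _ _ fun i =>
    (Category.assoc _ _ _).symm.trans ((hab i).trans (Category.assoc _ _ _))

noncomputable def unionDesc {W : PSh C} (f : ∀ i, A i ⟶ W)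
    (hf : ∀ i j, pullback.fst (g i) (g j) ≫ f i = pullback.snd (g i) (g j) ≫ f j) :
    unionPre g ⟶ W :=
  coequalizer.desc (Sigma.desc f) <| Sigma.hom_ext _ _ fun p => by
    erw [fstMap, sndMap, Sigma.ι_desc_assoc, Sigma.ι_desc_assoc, Category.assoc, Category.assoc,
      Sigma.ι_desc, Sigma.ι_desc]
    exact hf p.1 p.2

@[simp]
theorem unionπ_unionDesc {W : PSh C} (f : ∀ i, A i ⟶ W)
    (hf : ∀ i j, pullback.fst (g i) (g j) ≫ f i = pullback.snd (g i) (g j) ≫ f j) (i : ι) :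
    unionπ g i ≫ unionDesc g f hf = f i := by
  erw [Category.assoc, coequalizer.π_desc, Sigma.ι_desc]

@[simp]
theorem unionπ_unionι (i : ι) : unionπ g i ≫ unionι g = g i := by
  erw [Category.assoc, coequalizer.π_desc, Sigma.ι_desc]

end UnionAPI

section Pushout

variable {C : Type} [SmallCategory C] {n : ℕ} (U : Fin n → C) (X V : C)
  (g : ∀ i, U i ⟶ X) (h : V ⟶ X)

noncomputable def ddFst (i : Fin n) : ddA U X V g h i ⟶ yoneda.obj (U i) :=
  pullback.fst _ _

@[simp]
theorem unionπ_unionDDtoUnion (i : Fin n) :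
    unionπ (ddg U X V g h) i ≫ unionDDtoUnion U X V g h =
      ddFst U X V g h i ≫ unionπ (fun i => yoneda.map (g i)) i := by
  erw [Category.assoc, coequalizer.π_desc, Sigma.ι_desc]
  rfl

@[simp]
theorem unionπ_unionToBig (i : Fin n) :
    unionπ (fun i => yoneda.map (g i)) i ≫ unionToBig U X V g h =
      unionπ (bigg U X V g h) (some i) := by
  erw [Category.assoc, coequalizer.π_desc, Sigma.ι_desc]
  rfl

theorem vToBig_eq_unionπ : vToBig U X V g h = unionπ (bigg U X V g h) none := rfl

theorem unionDDtoUnion_comp_unionToBig :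
    unionDDtoUnion U X V g h ≫ unionToBig U X V g h =
      unionι (ddg U X V g h) ≫ vToBig U X V g h :=
  unionPre.hom_ext _ fun i => by
    rw [← Category.assoc, ← Category.assoc, unionπ_unionDDtoUnion, unionπ_unionι,
      Category.assoc, unionπ_unionToBig, vToBig_eq_unionπ]
    exact unionπ_condition (bigg U X V g h) (some i) none

variable {U X V g h} {W : PSh C} (a : unionPre (fun i => yoneda.map (g i)) ⟶ W)
  (b : yoneda.obj V ⟶ W)

noncomputable def bigFamily (o : Option (Fin n)) : bigA U V o ⟶ W :=
  match o with
  | none => b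
  | some i => unionπ (fun i => yoneda.map (g i)) i ≫ a

theorem bigFamily_compatible [Mono h]
    (hab : unionDDtoUnion U X V g h ≫ a = unionι (ddg U X V g h) ≫ b) (o o' : Option (Fin n)) :
    pullback.fst (bigg U X V g h o) (bigg U X V g h o') ≫ bigFamily a b o =
      pullback.snd (bigg U X V g h o) (bigg U X V g h o') ≫ bigFamily a b o' := by
  have hUV : ∀ i, ddFst U X V g h i ≫ unionπ (fun i => yoneda.map (g i)) i ≫ a =
      ddg U X V g h i ≫ b := fun i => by
    simpa only [← Category.assoc, unionπ_unionDDtoUnion, unionπ_unionι] using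
      unionπ (ddg U X V g h) i ≫= hab
  rcases o with _ | i <;> rcases o' with _ | j
  · exact fst_eq_snd_of_mono_eq (yoneda.map h) =≫ b
  · have := (pullbackSymmetry (yoneda.map h) (yoneda.map (g j))).hom ≫= hUV j
    erw [pullbackSymmetry_hom_comp_fst_assoc, pullbackSymmetry_hom_comp_snd_assoc] at this
    exact this.symm
  · exact hUV i
  · have := unionπ_condition (fun i => yoneda.map (g i)) i j =≫ a
    simp only [Category.assoc] at this
    exact this

variable {a b}
  (hf : ∀ o o', pullback.fst (bigg U X V g h o) (bigg U X V g h o') ≫ bigFamily a b o =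
    pullback.snd (bigg U X V g h o) (bigg U X V g h o') ≫ bigFamily a b o')

theorem unionToBig_comp_unionDesc_bigFamily :
    unionToBig U X V g h ≫ unionDesc _ (bigFamily a b) hf = a :=
  unionPre.hom_ext _ fun i => (Category.assoc _ _ _).symm.trans
    ((unionπ_unionToBig U X V g h i =≫ _).trans (unionπ_unionDesc _ _ hf (some i)))

theorem vToBig_comp_unionDesc_bigFamily : vToBig U X V g h ≫ unionDesc _ (bigFamily a b) hf = b :=
  unionπ_unionDesc _ _ hf none

theorem eq_unionDesc_bigFamily {m : unionPre (bigg U X V g h) ⟶ W}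
    (hma : unionToBig U X V g h ≫ m = a) (hmb : vToBig U X V g h ≫ m = b) :
    m = unionDesc _ (bigFamily a b) hf := by
  refine unionPre.hom_ext _ fun o => ?_
  rw [unionπ_unionDesc]
  rcases o with _ | i
  · exact hmb
  · exact (unionπ_unionToBig U X V g h i =≫ m).symm.trans
      ((Category.assoc _ _ _).trans (unionπ _ i ≫= hma))

end Pushout

end Flasque

open Flasque in
theorem flasque_union_isPushout_general {C : Type} [SmallCategory C] {n : ℕ}
    (U : Fin n → C) (X : C) (V : C) (g : ∀ i, U i ⟶ X) (h : V ⟶ X)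
    (hh : Mono h) :
    IsPushout (unionDDtoUnion U X V g h) (unionι (ddg U X V g h))
      (unionToBig U X V g h) (vToBig U X V g h) :=
  IsPushout.of_isColimit <| PushoutCocone.IsColimit.mk (unionDDtoUnion_comp_unionToBig U X V g h)
    (fun s => unionDesc _ (bigFamily s.inl s.inr) (bigFamily_compatible s.inl s.inr s.condition))
    (fun _ => unionToBig_comp_unionDesc_bigFamily _)
    (fun _ => vToBig_comp_unionDesc_bigFamily _)
    (fun _ _ hma hmb => eq_unionDesc_bigFamily _ hma hmb)

open Flasque in
/-- For a finite collection `U = {U_1, ..., U_{n-1}, V}` of monomorphisms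
into `X` in `C`, writing `U' = {U_1, ..., U_{n-1}}` and `U'' = {U_i ×_X V → V}`,
the presheaf `∪U` is the pushout of `∪U' ← ∪U'' → V` in the category of presheaves. -/
theorem flasque_union_isPushout {C : Type} [SmallCategory C] {n : ℕ}
    (U : Fin n → C) (X : C) (V : C) (g : ∀ i, U i ⟶ X) (h : V ⟶ X)
    (hg : ∀ i, Mono (g i)) (hh : Mono h) :
    IsPushout (unionDDtoUnion U X V g h) (unionι (ddg U X V g h))
      (unionToBig U X V g h) (vToBig U X V g h) :=
  flasque_union_isPushout_general U X V g h hh
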